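/- arXiv:1409.7228 — 2 statements merged into one kernel-verified Lean document; each statement's English description precedes it below -/
import Mathlib

section
/- For every nonzero non-invertible matrix B in M_2(F_p) (equivalently, every nonzero element of a minimal left ideal of M_2(F_p)), the sum of χ(uB) over all u in GL(2,p) equals p − p^2. -/
/-!
`χ = ψ ∘ tr` for the standard additive character `ψ` of `𝔽_p`, and the argument works for any
nontrivial additive character `ψ` of a finite field `K` with `q` elements. A nonzero singular `B`
has rank one, `B = x yᵀ`. Completing `x` to an invertible `P` with first column `x`, and `y` to an
invertible `Q` with first row `yᵀ`, gives `tr (u B) = (Q u P)₀₀`, so reindexing by `u ↦ Q u P`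
reduces the sum to `∑_{u ∈ GL₂(K)} ψ (u₀₀)`. Exactly `q (q - 1) (q - [a = 0])` invertible matrices
have top-left entry `a`, and `∑_a ψ a = 0`, so only the correction at `a = 0` survives and the sum
is `-q (q - 1)`.
-/

/-- The generating character `χ(A) = exp(2πi · t(A) / p)` on `M₂(𝔽_p)`, where `t(A)` is the
integer representative of the trace of `A`. -/
noncomputable def genChar (p : ℕ) (A : Matrix (Fin 2) (Fin 2) (ZMod p)) : ℂ :=
  Complex.exp (2 * Real.pi * Complex.I * ((Matrix.trace A).val : ℂ) / p)

open Finset Matrix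

theorem Fintype.sum_units_eq_sum_filter_isUnit {M R : Type*} [Monoid M] [Fintype M]
    [DecidableEq M] [AddCommMonoid R] [DecidablePred (IsUnit : M → Prop)] (f : M → R) :
    ∑ u : Mˣ, f u = ∑ x with IsUnit x, f x := by
  refine (sum_map univ ⟨Units.val, Units.val_injective⟩ f).symm.trans ?_
  congr 1
  ext x
  simp only [mem_map, mem_filter, mem_univ, true_and]
  rfl

theorem Finset.cast_card_filter_ne {α R : Type*} [Fintype α] [DecidableEq α] [AddGroupWithOne R]
    (e : α) : (#{x : α | x ≠ e} : R) = Fintype.card α - 1 := by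
  rw [filter_ne', cast_card_erase_of_mem (mem_univ _), card_univ]

theorem Matrix.sum_univ_fin_two {α M : Type*} [Fintype α] [AddCommMonoid M]
    (f : Matrix (Fin 2) (Fin 2) α → M) :
    ∑ A, f A = ∑ a, ∑ b, ∑ c, ∑ d, f !![a, b; c, d] := by
  let e : (α × α) × (α × α) ≃ Matrix (Fin 2) (Fin 2) α :=
    ((finTwoArrowEquiv α).prodCongr (finTwoArrowEquiv α)).symm.trans
      ((finTwoArrowEquiv (Fin 2 → α)).symm.trans Matrix.of)
  rw [← e.sum_comp]
  simp only [Fintype.sum_prod_type]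
  refine sum_congr rfl fun a _ => sum_congr rfl fun b _ => sum_congr rfl fun c _ =>
    sum_congr rfl fun d _ => congrArg f ?_
  ext i j
  fin_cases i <;> fin_cases j <;> rfl

namespace Matrix

variable {K : Type*} [Field K]

theorem exists_eq_vecMulVec_of_det_eq_zero {B : Matrix (Fin 2) (Fin 2) K} (hB0 : B ≠ 0)
    (hB : B.det = 0) : ∃ x y : Fin 2 → K, B = vecMulVec x y := by
  obtain ⟨i₀, j₀, hk⟩ : ∃ i j, B i j ≠ 0 := by
    by_contra! h
    exact hB0 (Matrix.ext h)
  have hminor : ∀ i j, B i j * B i₀ j₀ = B i j₀ * B i₀ j := by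
    rw [det_fin_two] at hB
    intro i j
    fin_cases i <;> fin_cases j <;> fin_cases i₀ <;> fin_cases j₀ <;>
      simp only [Fin.zero_eta, Fin.mk_one] <;>
      first | ring1 | linear_combination hB | linear_combination -hB
  refine ⟨fun i => B i j₀, (B i₀ j₀)⁻¹ • B i₀, Matrix.ext fun i j => ?_⟩
  rw [vecMulVec_apply, Pi.smul_apply, smul_eq_mul]
  field_simp
  exact hminor i j

theorem exists_isUnit_col_zero_eq {x : Fin 2 → K} (hx : x ≠ 0) :
    ∃ P : Matrix (Fin 2) (Fin 2) K, IsUnit P ∧ P.col 0 = x := by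
  by_cases h0 : x 0 = 0
  · have h1 : x 1 ≠ 0 := fun h1 => hx (funext fun i => by fin_cases i <;> assumption)
    refine ⟨!![0, 1; x 1, 0], ?_, ?_⟩
    · simpa [isUnit_iff_isUnit_det] using h1
    · ext i; fin_cases i <;> simp [h0]
  · refine ⟨!![x 0, 0; x 1, 1], ?_, ?_⟩
    · simpa [isUnit_iff_isUnit_det] using h0
    · ext i; fin_cases i <;> simp

variable [Fintype K] [DecidableEq K]

local notation "q" => Fintype.card K

theorem sum_units_trace_mul_vecMulVec {M : Type*} [AddCommMonoid M] (f : K → M)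
    {x y : Fin 2 → K} (hx : x ≠ 0) (hy : y ≠ 0) :
    ∑ u : GL (Fin 2) K, f (trace ((u : Matrix (Fin 2) (Fin 2) K) * vecMulVec x y)) =
      ∑ u : GL (Fin 2) K, f ((u : Matrix (Fin 2) (Fin 2) K) 0 0) := by
  obtain ⟨P, hP, hPx⟩ := exists_isUnit_col_zero_eq hx
  obtain ⟨Q, hQ, hQy⟩ := exists_isUnit_col_zero_eq hy
  refine Fintype.sum_equiv ((Equiv.mulRight hP.unit).trans (Equiv.mulLeft
    ((isUnit_transpose Q).mpr hQ).unit)) _ _ fun u => congrArg f ?_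
  simp only [Equiv.trans_apply, Equiv.coe_mulRight, Equiv.coe_mulLeft, Units.val_mul,
    IsUnit.unit_spec, mul_vecMulVec, trace_vecMulVec, ← Matrix.mul_assoc, mul_mul_apply]
  rw [← hPx, ← hQy, dotProduct_comm]
  rfl

theorem card_units_filter_apply_zero_zero {R : Type*} [CommRing R] (a : K) :
    (#{u : GL (Fin 2) K | (u : Matrix (Fin 2) (Fin 2) K) 0 0 = a} : R) =
      q * (q - 1) * (q - if a = 0 then 1 else 0) := by
  rw [natCast_card_filter, Fintype.sum_units_eq_sum_filter_isUnit
    (fun A : Matrix (Fin 2) (Fin 2) K => if A 0 0 = a then (1 : R) else 0), sum_filter,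
    sum_univ_fin_two]
  simp only [isUnit_iff_isUnit_det, det_fin_two_of, isUnit_iff_ne_zero, of_apply, cons_val',
    cons_val_zero, cons_val_fin_one, ← ite_and]
  simp only [and_comm, ite_and, sum_ite_irrel, sum_const_zero, sum_ite_eq', mem_univ, if_true]
  obtain rfl | ha := eq_or_ne a 0
  · simp only [zero_mul, zero_sub, neg_ne_zero, mul_ne_zero_iff, ite_and, sum_ite_irrel,
      sum_const_zero, if_true]
    simp only [← sum_filter, sum_const, nsmul_eq_mul, mul_one, cast_card_filter_ne, card_univ]
    ring
  · have hd (b c : K) : #{d : K | a * d - b * c ≠ 0} = #{d : K | d ≠ a⁻¹ * (b * c)} := by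
      congr 1
      ext d
      simp [sub_eq_zero, eq_inv_mul_iff_mul_eq₀ ha]
    simp only [← natCast_card_filter, hd, cast_card_filter_ne, sum_const, card_univ, if_neg ha,
      nsmul_eq_mul]
    ring

end Matrix

namespace AddChar

open Matrix

variable {K R : Type*} [Field K] [Fintype K] [DecidableEq K] [CommRing R] [IsDomain R]
  {ψ : AddChar K R}

local notation "q" => Fintype.card K

theorem sum_units_apply_zero_zero (hψ : ψ ≠ 1) :
    ∑ u : GL (Fin 2) K, ψ ((u : Matrix (Fin 2) (Fin 2) K) 0 0) = q - q ^ 2 := by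
  calc ∑ u : GL (Fin 2) K, ψ ((u : Matrix (Fin 2) (Fin 2) K) 0 0)
      = ∑ a, (#{u : GL (Fin 2) K | (u : Matrix (Fin 2) (Fin 2) K) 0 0 = a} : R)
          * ψ a := by
        rw [← sum_fiberwise' univ (fun u : GL (Fin 2) K => (u : Matrix (Fin 2) (Fin 2) K) 0 0)]
        simp only [sum_const, nsmul_eq_mul]
    _ = q ^ 2 * (q - 1) * ∑ a, ψ a - q * (q - 1) * ∑ a, if a = 0 then ψ a else 0 := by
        simp only [card_units_filter_apply_zero_zero, mul_sum, ← sum_sub_distrib]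
        refine sum_congr rfl fun a _ => ?_
        split_ifs <;> ring
    _ = q - q ^ 2 := by
        rw [sum_eq_zero_of_ne_one hψ, sum_ite_eq', if_pos (mem_univ _), map_zero_eq_one]
        ring

theorem sum_units_trace_mul_of_det_eq_zero (hψ : ψ ≠ 1) {B : Matrix (Fin 2) (Fin 2) K}
    (hB0 : B ≠ 0) (hB : B.det = 0) :
    ∑ u : GL (Fin 2) K, ψ (trace ((u : Matrix (Fin 2) (Fin 2) K) * B)) = q - q ^ 2 := by
  obtain ⟨x, y, rfl⟩ := exists_eq_vecMulVec_of_det_eq_zero hB0 hB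
  obtain ⟨hx, hy⟩ : x ≠ 0 ∧ y ≠ 0 := by simpa [not_or] using hB0
  rw [sum_units_trace_mul_vecMulVec ψ hx hy, sum_units_apply_zero_zero hψ]

end AddChar

theorem genChar_eq_stdAddChar_trace (p : ℕ) [NeZero p] (A : Matrix (Fin 2) (Fin 2) (ZMod p)) :
    genChar p A = ZMod.stdAddChar (trace A) := by
  rw [genChar, ZMod.stdAddChar_apply, ZMod.toCircle_apply]

/-- For every nonzero non-invertible `B ∈ M₂(𝔽_p)`,
`∑_{u ∈ GL(2,p)} χ(uB) = p − p²`. -/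
theorem sum_genChar_mul_zero_divisor (p : ℕ) [Fact p.Prime]
    (B : Matrix (Fin 2) (Fin 2) (ZMod p)) (hB0 : B ≠ 0) (hB : ¬ IsUnit B) :
    (∑ u : (Matrix (Fin 2) (Fin 2) (ZMod p))ˣ,
        genChar p ((u : Matrix (Fin 2) (Fin 2) (ZMod p)) * B)) = (p : ℂ) - (p : ℂ) ^ 2 := by
  have hψ : (ZMod.stdAddChar : AddChar (ZMod p) ℂ) ≠ 1 := by
    simpa using ZMod.isPrimitive_stdAddChar p one_ne_zero
  have hdet : B.det = 0 := by
    simpa [isUnit_iff_isUnit_det] using hB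
  simp only [genChar_eq_stdAddChar_trace]
  rw [AddChar.sum_units_trace_mul_of_det_eq_zero hψ hB0 hdet, ZMod.card]
end

section
/- Let p be a prime with p ≡ 2 or 3 (mod 5) and let T = [[0,1],[1,p−1]] ∈ M_2(F_p). Then the set F_p[T] = {aI + bT : a, b ∈ F_p} is a commutative subring of M_2(F_p) that is a field with exactly p^2 elements. -/
open Polynomial

/-!
`T` is a root of `X² + X - 1`, which is irreducible over `𝔽_p`: a root `x` would make
`5 = (2x + 1)²` a square mod `p`, while by quadratic reciprocity `5` is a square mod an odd
prime `p` only if `p` is a square mod `5`, i.e. `p ≡ ±1 (mod 5)` (and `X² + X + 1` has no root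
in `𝔽₂`). Hence `𝔽_p[T] = aeval T (𝔽_p[X]) ≅ 𝔽_p[X]/(X² + X - 1)` is a field of degree 2 over
`𝔽_p`, and reducing polynomials modulo `X² + X - 1` shows that its elements are the `aI + bT`.
-/

theorem ZMod.not_isSquare_five {p : ℕ} [Fact p.Prime] (hp2 : p ≠ 2)
    (hp : p % 5 = 2 ∨ p % 5 = 3) : ¬IsSquare (5 : ZMod p) := by
  have : Fact (Nat.Prime 5) := ⟨by norm_num⟩
  rw [← Nat.cast_ofNat,
    ← ZMod.exists_sq_eq_prime_iff_of_mod_four_eq_one (p := 5) (by norm_num) hp2, ← ZMod.natCast_mod]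
  rcases hp with h | h <;> rw [h] <;> decide +revert

theorem ZMod.sq_add_self_sub_one_ne_zero {p : ℕ} [Fact p.Prime] (hp : p % 5 = 2 ∨ p % 5 = 3)
    (x : ZMod p) : x ^ 2 + x - 1 ≠ 0 := by
  rcases eq_or_ne p 2 with rfl | hp2
  · revert x
    decide +revert
  · intro hx
    exact ZMod.not_isSquare_five hp2 hp ⟨2 * x + 1, by linear_combination (-4 : ZMod p) * hx⟩

theorem ZMod.irreducible_X_sq_add_X_sub_one {p : ℕ} [Fact p.Prime]
    (hp : p % 5 = 2 ∨ p % 5 = 3) :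
    Irreducible (X ^ 2 + X - 1 : (ZMod p)[X]) :=
  irreducible_of_degree_le_three_of_not_isRoot
    (by rw [show natDegree (X ^ 2 + X - 1 : (ZMod p)[X]) = 2 by compute_degree!]; decide)
    (fun x => by simpa using ZMod.sq_add_self_sub_one_ne_zero hp x)

theorem coe_range_aeval_of_natDegree_eq_two {R A : Type*} [CommRing R] [Ring A] [Algebra R A]
    {f : R[X]} {t : A} (hmon : f.Monic) (hdeg : f.natDegree = 2) (ht : aeval t f = 0) :
    ((aeval (R := R) t).range : Set A) = {x | ∃ a b : R, x = a • 1 + b • t} := by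
  ext x
  simp only [AlgHom.coe_range, Set.mem_range, Set.mem_ofPred_eq]
  constructor
  · rintro ⟨g, rfl⟩
    have hlt : (g %ₘ f).natDegree < 2 :=
      hdeg ▸ natDegree_modByMonic_lt g hmon (by rintro rfl; simp at hdeg)
    refine ⟨(g %ₘ f).coeff 0, (g %ₘ f).coeff 1, ?_⟩
    rw [← aeval_modByMonic_eq_self_of_root ht,
      eq_X_add_C_of_natDegree_le_one (Nat.le_of_lt_succ hlt)]
    simp [Algebra.smul_def, add_comm]
  · rintro ⟨a, b, rfl⟩
    exact ⟨C a + C b * X, by simp [Algebra.smul_def]⟩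

section AevalRange

variable {F A : Type*} [Field F] [Ring A] [Algebra F A] {f : F[X]} {t : A}

theorem ker_aeval_eq_span_of_irreducible [Nontrivial A] (hf : Irreducible f)
    (ht : aeval t f = 0) :
    RingHom.ker (aeval (R := F) t) = Ideal.span {f} :=
  ((PrincipalIdealRing.isMaximal_of_irreducible hf).eq_of_le (RingHom.ker_ne_top _)
    ((Ideal.span_singleton_le_iff_mem _).mpr ht)).symm

theorem isField_range_aeval_of_irreducible [Nontrivial A] (hf : Irreducible f)
    (ht : aeval t f = 0) :
    IsField (aeval (R := F) t).range := by
  have hmax : (RingHom.ker (aeval (R := F) t)).IsMaximal := by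
    rw [ker_aeval_eq_span_of_irreducible hf ht]
    exact PrincipalIdealRing.isMaximal_of_irreducible hf
  exact (Ideal.quotientKerEquivRange _).symm.toMulEquiv.isField
    ((Ideal.Quotient.maximal_ideal_iff_isField_quotient _).mp hmax)

theorem natCard_quotient_span_eq_pow_natDegree (hf : f ≠ 0) :
    Nat.card (F[X] ⧸ Ideal.span {f}) = Nat.card F ^ f.natDegree := by
  have : Module.Finite F (F[X] ⧸ Ideal.span {f}) := (AdjoinRoot.powerBasis hf).finite
  rw [Module.natCard_eq_pow_finrank (K := F), finrank_quotient_span_eq_natDegree]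

theorem natCard_range_aeval_of_irreducible [Nontrivial A] (hf : Irreducible f)
    (ht : aeval t f = 0) :
    Nat.card (aeval (R := F) t).range = Nat.card F ^ f.natDegree := by
  rw [← Nat.card_congr (Ideal.quotientKerEquivRange _).toEquiv,
    ker_aeval_eq_span_of_irreducible hf ht, natCard_quotient_span_eq_pow_natDegree hf.ne_zero]

end AevalRange

/-- If `p ≡ 2` or `3 (mod 5)` and `T = [[0,1],[1,p−1]] ∈ M₂(𝔽_p)`, then
`𝔽_p[T] = {aI + bT : a, b ∈ 𝔽_p}` is a commutative subring of `M₂(𝔽_p)` which is a field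
with exactly `p²` elements. -/
theorem Fp_adjoin_T_is_field (p : ℕ) [Fact p.Prime] (hp : p % 5 = 2 ∨ p % 5 = 3)
    (T : Matrix (Fin 2) (Fin 2) (ZMod p)) (hT : T = !![0, 1; 1, (p : ZMod p) - 1]) :
    ∃ S : Subring (Matrix (Fin 2) (Fin 2) (ZMod p)),
      (S : Set (Matrix (Fin 2) (Fin 2) (ZMod p))) =
        {A | ∃ a b : ZMod p, A = a • (1 : Matrix (Fin 2) (Fin 2) (ZMod p)) + b • T} ∧
      (∀ x ∈ S, ∀ y ∈ S, x * y = y * x) ∧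
      IsField S ∧
      Nat.card S = p ^ 2 := by
  have hirr : Irreducible (X ^ 2 + X - 1 : (ZMod p)[X]) := ZMod.irreducible_X_sq_add_X_sub_one hp
  have hdeg : (X ^ 2 + X - 1 : (ZMod p)[X]).natDegree = 2 := by compute_degree!
  have hmon : (X ^ 2 + X - 1 : (ZMod p)[X]).Monic := by monicity!
  have hroot : aeval T (X ^ 2 + X - 1 : (ZMod p)[X]) = 0 := by
    subst hT
    simp [sq, Matrix.one_fin_two]
  have hfield := isField_range_aeval_of_irreducible hirr hroot
  refine ⟨(aeval T).range.toSubring,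
    coe_range_aeval_of_natDegree_eq_two hmon hdeg hroot,
    fun x hx y hy => congrArg Subtype.val (hfield.mul_comm ⟨x, hx⟩ ⟨y, hy⟩), hfield, ?_⟩
  have hcard := natCard_range_aeval_of_irreducible hirr hroot
  rwa [Nat.card_zmod, hdeg] at hcard
end
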